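/- arXiv:2405.02805 — 4 statements merged into one kernel-verified Lean document; each statement's English description precedes it below -/
import Mathlib

section
/- Let d ≥ 1 and let H : ℝ^d × ℝ^d → ℝ be twice continuously differentiable with Hamiltonian vector field γ_H(q,p) = (∇_p H, -∇_q H). Suppose φ : ℝ × (ℝ^d × ℝ^d) → ℝ^d × ℝ^d is continuously differentiable jointly in (t,x), satisfies φ(0, x) = x for all x, and ∂φ/∂t (t, x) = γ_H(φ(t,x)) for all t and x. Then for every t and x, the spatial derivative D_x φ(t, x) preserves the standard symplectic form: Ω(D_x φ(t,x) u, D_x φ(t,x) v) = Ω(u, v) for all u, v ∈ ℝ^d × ℝ^d, where Ω((a,b),(c,e)) = ⟨a,e⟩ - ⟨b,c⟩. -/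
open scoped RealInnerProductSpace

/-- The standard symplectic bilinear form `Ω((a,b),(c,e)) = ⟨a,e⟩ - ⟨b,c⟩`
on `ℝ^d × ℝ^d`. -/
noncomputable def stdSymplecticForm (d : ℕ)
    (v w : EuclideanSpace ℝ (Fin d) × EuclideanSpace ℝ (Fin d)) : ℝ :=
  ⟪v.1, w.2⟫ - ⟪v.2, w.1⟫

/-- The Hamiltonian vector field `γ_H(q,p) = (∇ₚ H (q,p), -∇_q H (q,p))`. -/
noncomputable def hamiltonianVF (d : ℕ)
    (H : EuclideanSpace ℝ (Fin d) × EuclideanSpace ℝ (Fin d) → ℝ)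
    (x : EuclideanSpace ℝ (Fin d) × EuclideanSpace ℝ (Fin d)) :
    EuclideanSpace ℝ (Fin d) × EuclideanSpace ℝ (Fin d) :=
  (gradient (fun p' => H (x.1, p')) x.2, -gradient (fun q' => H (q', x.2)) x.1)

section Aux

open InnerProductSpace ContinuousLinearMap

/-- Shorthand for the phase space `ℝ^d × ℝ^d`. -/
abbrev PS (d : ℕ) := EuclideanSpace ℝ (Fin d) × EuclideanSpace ℝ (Fin d)

/-- The inverse of the Riesz isomorphism, as a continuous `ℝ`-linear map. -/
noncomputable def dualIso (E : Type*) [NormedAddCommGroup E] [InnerProductSpace ℝ E]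
    [CompleteSpace E] : (E →L[ℝ] ℝ) →L[ℝ] E :=
  LinearMap.mkContinuous
    { toFun := fun ℓ => (toDual ℝ E).symm ℓ
      map_add' := fun a b => by simp
      map_smul' := fun c a => by simp }
    1 (fun ℓ => by simp)

@[simp] lemma dualIso_apply {E : Type*} [NormedAddCommGroup E] [InnerProductSpace ℝ E]
    [CompleteSpace E] (ℓ : E →L[ℝ] ℝ) : dualIso E ℓ = (toDual ℝ E).symm ℓ := rfl

lemma dualIso_inner {E : Type*} [NormedAddCommGroup E] [InnerProductSpace ℝ E]
    [CompleteSpace E] (ℓ : E →L[ℝ] ℝ) (v : E) : ⟪dualIso E ℓ, v⟫ = ℓ v := by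
  simp [toDual_symm_apply]

/-- The linear map `ℓ ↦ (T(ℓ ∘ inr), -T(ℓ ∘ inl))` where `T` is the inverse Riesz map. -/
noncomputable def symplL (E : Type*) [NormedAddCommGroup E] [InnerProductSpace ℝ E]
    [CompleteSpace E] : ((E × E) →L[ℝ] ℝ) →L[ℝ] (E × E) :=
  ((dualIso E).comp ((compL ℝ E (E × E) ℝ).flip (inr ℝ E E))).prod
    (-((dualIso E).comp ((compL ℝ E (E × E) ℝ).flip (inl ℝ E E))))

lemma symplL_fst {E : Type*} [NormedAddCommGroup E] [InnerProductSpace ℝ E]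
    [CompleteSpace E] (ℓ : (E × E) →L[ℝ] ℝ) :
    (symplL E ℓ).1 = dualIso E (ℓ.comp (inr ℝ E E)) := rfl

lemma symplL_snd {E : Type*} [NormedAddCommGroup E] [InnerProductSpace ℝ E]
    [CompleteSpace E] (ℓ : (E × E) →L[ℝ] ℝ) :
    (symplL E ℓ).2 = -dualIso E (ℓ.comp (inl ℝ E E)) := rfl

lemma prod_zero_id {F G : Type*} [NormedAddCommGroup F] [NormedSpace ℝ F]
    [NormedAddCommGroup G] [NormedSpace ℝ G] :
    ((0 : G →L[ℝ] F).prod (ContinuousLinearMap.id ℝ G)) = inr ℝ F G := by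
  ext v <;> simp

lemma prod_id_zero {F G : Type*} [NormedAddCommGroup F] [NormedSpace ℝ F]
    [NormedAddCommGroup G] [NormedSpace ℝ G] :
    ((ContinuousLinearMap.id ℝ F).prod (0 : F →L[ℝ] G)) = inl ℝ F G := by
  ext v <;> simp

/-- `Ω(Lℓ, v) = ℓ v`. -/
lemma omega_symplL (d : ℕ) (ℓ : PS d →L[ℝ] ℝ) (v : PS d) :
    stdSymplecticForm d (symplL _ ℓ) v = ℓ v := by
  rw [stdSymplecticForm, symplL_fst, symplL_snd, inner_neg_left, dualIso_inner, dualIso_inner]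
  rw [sub_neg_eq_add]
  simp only [ContinuousLinearMap.comp_apply]
  rw [← map_add]
  congr 1
  have : (inr ℝ (EuclideanSpace ℝ (Fin d)) (EuclideanSpace ℝ (Fin d))) v.2
      + (inl ℝ (EuclideanSpace ℝ (Fin d)) (EuclideanSpace ℝ (Fin d))) v.1 = (v.1, v.2) := by
    simp [Prod.ext_iff]
  rw [this]

lemma omega_antisymm (d : ℕ) (v w : PS d) :
    stdSymplecticForm d w v = -stdSymplecticForm d v w := by
  rw [stdSymplecticForm, stdSymplecticForm,
    real_inner_comm w.1 v.2, real_inner_comm w.2 v.1]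
  ring

/-- The Hamiltonian vector field equals `symplL` applied to the total derivative. -/
lemma hamiltonianVF_eq (d : ℕ) (H : PS d → ℝ) (hH : Differentiable ℝ H) (x : PS d) :
    hamiltonianVF d H x = symplL _ (fderiv ℝ H x) := by
  have h1 : HasFDerivAt (fun p' : EuclideanSpace ℝ (Fin d) => H (x.1, p'))
      ((fderiv ℝ H x).comp (inr ℝ _ _)) x.2 := by
    have := ((hH x).hasFDerivAt.comp x.2
      (HasFDerivAt.prodMk (hasFDerivAt_const x.1 x.2) (hasFDerivAt_id (𝕜 := ℝ) x.2)))
    rw [prod_zero_id] at this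
    exact this
  have h2 : HasFDerivAt (fun q' : EuclideanSpace ℝ (Fin d) => H (q', x.2))
      ((fderiv ℝ H x).comp (inl ℝ _ _)) x.1 := by
    have := ((hH x).hasFDerivAt.comp x.1
      (HasFDerivAt.prodMk (hasFDerivAt_id (𝕜 := ℝ) x.1) (hasFDerivAt_const x.2 x.1)))
    rw [prod_id_zero] at this
    exact this
  have g1 := h1.fderiv
  have g2 := h2.fderiv
  unfold hamiltonianVF
  rw [gradient, gradient, g1, g2]
  rfl

lemma norm_comp_inr_le {F G X : Type*} [NormedAddCommGroup F] [NormedSpace ℝ F]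
    [NormedAddCommGroup G] [NormedSpace ℝ G] [NormedAddCommGroup X] [NormedSpace ℝ X]
    (ℓ : (F × G) →L[ℝ] X) : ‖ℓ.comp (inr ℝ F G)‖ ≤ ‖ℓ‖ := by
  refine opNorm_le_bound _ (norm_nonneg ℓ) fun v => ?_
  calc ‖ℓ.comp (inr ℝ F G) v‖ = ‖ℓ ((0 : F), v)‖ := rfl
    _ ≤ ‖ℓ‖ * ‖((0 : F), v)‖ := le_opNorm _ _
    _ = ‖ℓ‖ * ‖v‖ := by rw [Prod.norm_def]; simp [norm_nonneg]

end Aux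

set_option maxHeartbeats 2000000 in
set_option synthInstance.maxHeartbeats 400000 in
/-- **The time evolution of the Hamiltonian flow is a symplectomorphism**
(Proposition A.3). If `φ` is a C¹ flow of the Hamiltonian vector field `γ_H` of a
C² Hamiltonian `H`, then for every `t` and `x` the spatial derivative `D_x φ(t,x)`
preserves the standard symplectic form. -/
theorem hamiltonian_flow_is_symplectomorphism
    (d : ℕ) (hd : 1 ≤ d)
    (H : EuclideanSpace ℝ (Fin d) × EuclideanSpace ℝ (Fin d) → ℝ)
    (hH : ContDiff ℝ 2 H)
    (φ : ℝ × (EuclideanSpace ℝ (Fin d) × EuclideanSpace ℝ (Fin d)) →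
      EuclideanSpace ℝ (Fin d) × EuclideanSpace ℝ (Fin d))
    (hφ : ContDiff ℝ 1 φ)
    (hφ0 : ∀ x, φ (0, x) = x)
    (hflow : ∀ (t : ℝ) (x : EuclideanSpace ℝ (Fin d) × EuclideanSpace ℝ (Fin d)),
      HasDerivAt (fun s => φ (s, x)) (hamiltonianVF d H (φ (t, x))) t) :
    ∀ (t : ℝ) (x u v : EuclideanSpace ℝ (Fin d) × EuclideanSpace ℝ (Fin d)),
      stdSymplecticForm d (fderiv ℝ (fun y => φ (t, y)) x u)
          (fderiv ℝ (fun y => φ (t, y)) x v)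
        = stdSymplecticForm d u v := by
  classical
  intro t x u v
  have hH1 : Differentiable ℝ H := hH.differentiable (by norm_num)
  set γ : PS d → PS d := fun z => symplL _ (fderiv ℝ H z) with hγdef
  have hDH : ContDiff ℝ 1 (fderiv ℝ H) := hH.fderiv_right (by norm_num)
  have hγ : ContDiff ℝ 1 γ :=
    ((symplL (EuclideanSpace ℝ (Fin d))).contDiff).comp hDH
  have hγvf : ∀ z, hamiltonianVF d H z = γ z := fun z => hamiltonianVF_eq d H hH1 z
  have hflow' : ∀ (s : ℝ) (y : PS d), HasDerivAt (fun s' => φ (s', y)) (γ (φ (s, y))) s := by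
    intro s y; rw [← hγvf]; exact hflow s y
  set ψ : ℝ × PS d → PS d := fun p => γ (φ p) with hψdef
  have hψ : ContDiff ℝ 1 ψ := hγ.comp hφ
  have hψc : Continuous ψ := hψ.continuous
  set Dyψ : ℝ → PS d → (PS d →L[ℝ] PS d) :=
    fun s y => (fderiv ℝ ψ (s, y)).comp (ContinuousLinearMap.inr ℝ ℝ (PS d)) with hDyψdef
  have hDφ : ∀ (s : ℝ) (y : PS d), HasFDerivAt (fun y' => φ (s, y'))
      ((fderiv ℝ φ (s, y)).comp (ContinuousLinearMap.inr ℝ ℝ (PS d))) y := by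
    intro s y
    have := ((hφ.differentiable (by norm_num)) (s, y)).hasFDerivAt.comp y
      (HasFDerivAt.prodMk (hasFDerivAt_const s y) (hasFDerivAt_id (𝕜 := ℝ) y))
    rw [prod_zero_id] at this
    exact this
  have hDψ : ∀ (s : ℝ) (y : PS d), HasFDerivAt (fun y' => ψ (s, y')) (Dyψ s y) y := by
    intro s y
    have := ((hψ.differentiable (by norm_num)) (s, y)).hasFDerivAt.comp y
      (HasFDerivAt.prodMk (hasFDerivAt_const s y) (hasFDerivAt_id (𝕜 := ℝ) y))
    rw [prod_zero_id] at this
    exact this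
  set A : ℝ → (PS d →L[ℝ] PS d) := fun s => fderiv ℝ (fun y => φ (s, y)) x with hAdef
  have hA_eq : ∀ s, A s = (fderiv ℝ φ (s, x)).comp (ContinuousLinearMap.inr ℝ ℝ (PS d)) :=
    fun s => (hDφ s x).fderiv
  -- integral representation of the flow
  have hint : ∀ (s : ℝ) (y : PS d), φ (s, y) = y + ∫ r in (0:ℝ)..s, ψ (r, y) := by
    intro s y
    have hcont : Continuous fun r : ℝ => ψ (r, y) :=
      hψc.comp (continuous_id.prodMk continuous_const)
    have := intervalIntegral.integral_eq_sub_of_hasDerivAt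
      (fun r _ => hflow' r y) (hcont.intervalIntegrable 0 s)
    rw [this, hφ0 y]
    abel
  have hfψc : Continuous (fderiv ℝ ψ) := hψ.continuous_fderiv (by norm_num)
  have hWc : Continuous fun s => Dyψ s x :=
    (hfψc.comp (continuous_id.prodMk continuous_const)).clm_comp continuous_const
  -- differentiation under the integral sign
  have hA' : ∀ s : ℝ, HasFDerivAt (fun y => φ (s, y))
      (ContinuousLinearMap.id ℝ (PS d) + ∫ r in (0:ℝ)..s, Dyψ r x) x := by
    intro s
    obtain ⟨M, hM⟩ := ((isCompact_uIcc (a := (0:ℝ)) (b := s)).prod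
      (isCompact_closedBall x 1)).exists_bound_of_continuousOn hfψc.continuousOn
    have key : HasFDerivAt (fun y => ∫ r in (0:ℝ)..s, ψ (r, y))
        (∫ r in (0:ℝ)..s, Dyψ r x) x := by
      apply intervalIntegral.hasFDerivAt_integral_of_dominated_of_fderiv_le
        (F' := fun y r => Dyψ r y) (bound := fun _ => M) (Metric.ball_mem_nhds x one_pos)
      · filter_upwards with y
        exact (hψc.comp (continuous_id.prodMk continuous_const)).aestronglyMeasurable
      · exact ((hψc.comp (continuous_id.prodMk continuous_const)).intervalIntegrable 0 s)
      · exact hWc.aestronglyMeasurable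
      · filter_upwards with r hr y hy
        have hmem : ((r, y) : ℝ × PS d) ∈ Set.uIcc (0:ℝ) s ×ˢ Metric.closedBall x 1 :=
          ⟨Set.uIoc_subset_uIcc hr, Metric.ball_subset_closedBall hy⟩
        calc ‖Dyψ r y‖ ≤ ‖fderiv ℝ ψ (r, y)‖ := norm_comp_inr_le _
          _ ≤ M := hM (r, y) hmem
      · exact intervalIntegrable_const
      · filter_upwards with r hr y hy
        exact hDψ r y
    have heq : (fun y : PS d => φ (s, y)) = fun y => y + ∫ r in (0:ℝ)..s, ψ (r, y) :=
      funext fun y => hint s y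
    rw [heq]
    exact (hasFDerivAt_id x).add key
  have hA_int : ∀ s : ℝ, A s = ContinuousLinearMap.id ℝ (PS d) + ∫ r in (0:ℝ)..s, Dyψ r x :=
    fun s => (hA' s).fderiv
  -- the variational equation : A'(s) = Dyψ s x
  have hAderiv : ∀ s : ℝ, HasDerivAt A (Dyψ s x) s := by
    intro s
    have h1 : HasDerivAt (fun s' => ContinuousLinearMap.id ℝ (PS d) + ∫ r in (0:ℝ)..s', Dyψ r x)
        (Dyψ s x) s := by
      have hF := intervalIntegral.integral_hasDerivAt_right
        (f := fun r => Dyψ r x) (hWc.intervalIntegrable 0 s)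
        hWc.aestronglyMeasurable.stronglyMeasurableAtFilter hWc.continuousAt
      simpa using hF.const_add (ContinuousLinearMap.id ℝ (PS d))
    have hfun : (fun s' => ContinuousLinearMap.id ℝ (PS d) + ∫ r in (0:ℝ)..s', Dyψ r x) = A :=
      funext fun s' => (hA_int s').symm
    rwa [hfun] at h1
  -- chain rule : Dyψ s x = Dγ(φ(s,x)) ∘ A s
  have hchain : ∀ s : ℝ, Dyψ s x = (fderiv ℝ γ (φ (s, x))).comp (A s) := by
    intro s
    have hAs : HasFDerivAt (fun y => φ (s, y)) (A s) x := by
      rw [hA_eq s]; exact hDφ s x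
    have h1 : HasFDerivAt (fun y => ψ (s, y))
        ((fderiv ℝ γ (φ (s, x))).comp (A s)) x := by
      have := ((hγ.differentiable (by norm_num)) (φ (s, x))).hasFDerivAt.comp x hAs
      exact this
    exact (hDψ s x).unique h1
  -- Dγ(z) = symplL ∘ Hessian, and the Hessian is symmetric
  have hDγ : ∀ z : PS d, fderiv ℝ γ z = (symplL _).comp (fderiv ℝ (fderiv ℝ H) z) := by
    intro z
    have h1 : HasFDerivAt γ ((symplL _).comp (fderiv ℝ (fderiv ℝ H) z)) z :=
      (symplL (EuclideanSpace ℝ (Fin d))).hasFDerivAt.comp z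
        ((hDH.differentiable (by norm_num)) z).hasFDerivAt
    exact h1.fderiv
  have hsymm : ∀ (z w w' : PS d),
      fderiv ℝ (fderiv ℝ H) z w w' = fderiv ℝ (fderiv ℝ H) z w' w := fun z w w' =>
    second_derivative_symmetric (fun y => (hH1 y).hasFDerivAt)
      ((hDH.differentiable (by norm_num)) z).hasFDerivAt w w'
  -- the infinitesimal symplectic identity
  have hkey : ∀ (z w w' : PS d),
      stdSymplecticForm d (fderiv ℝ γ z w) w' + stdSymplecticForm d w (fderiv ℝ γ z w') = 0 := by
    intro z w w'
    rw [hDγ z]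
    have e1 : stdSymplecticForm d (((symplL _).comp (fderiv ℝ (fderiv ℝ H) z)) w) w'
        = fderiv ℝ (fderiv ℝ H) z w w' := omega_symplL d _ _
    have e2 : stdSymplecticForm d w (((symplL _).comp (fderiv ℝ (fderiv ℝ H) z)) w')
        = -fderiv ℝ (fderiv ℝ H) z w' w := by
      rw [omega_antisymm]
      exact congrArg Neg.neg (omega_symplL d _ _)
    rw [e1, e2, hsymm z w w']
    ring
  -- the function s ↦ Ω(A s u, A s v) has zero derivative
  have hg : ∀ s : ℝ, HasDerivAt (fun s' => stdSymplecticForm d (A s' u) (A s' v)) 0 s := by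
    intro s
    have hAu : HasDerivAt (fun s' => A s' u) (Dyψ s x u) s := by
      simpa using (hAderiv s).clm_apply (hasDerivAt_const s u)
    have hAv : HasDerivAt (fun s' => A s' v) (Dyψ s x v) s := by
      simpa using (hAderiv s).clm_apply (hasDerivAt_const s v)
    have hAu1 : HasDerivAt (fun s' => (A s' u).1) ((Dyψ s x u).1) s :=
      (ContinuousLinearMap.fst ℝ (EuclideanSpace ℝ (Fin d)) (EuclideanSpace ℝ (Fin d))).hasFDerivAt.comp_hasDerivAt s hAu
    have hAu2 : HasDerivAt (fun s' => (A s' u).2) ((Dyψ s x u).2) s :=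
      (ContinuousLinearMap.snd ℝ (EuclideanSpace ℝ (Fin d)) (EuclideanSpace ℝ (Fin d))).hasFDerivAt.comp_hasDerivAt s hAu
    have hAv1 : HasDerivAt (fun s' => (A s' v).1) ((Dyψ s x v).1) s :=
      (ContinuousLinearMap.fst ℝ (EuclideanSpace ℝ (Fin d)) (EuclideanSpace ℝ (Fin d))).hasFDerivAt.comp_hasDerivAt s hAv
    have hAv2 : HasDerivAt (fun s' => (A s' v).2) ((Dyψ s x v).2) s :=
      (ContinuousLinearMap.snd ℝ (EuclideanSpace ℝ (Fin d)) (EuclideanSpace ℝ (Fin d))).hasFDerivAt.comp_hasDerivAt s hAv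
    have h1 := (hAu1.inner ℝ hAv2).sub (hAu2.inner ℝ hAv1)
    have eu : Dyψ s x u = fderiv ℝ γ (φ (s, x)) (A s u) := by rw [hchain s]; rfl
    have ev : Dyψ s x v = fderiv ℝ γ (φ (s, x)) (A s v) := by rw [hchain s]; rfl
    have hk : stdSymplecticForm d (Dyψ s x u) (A s v)
        + stdSymplecticForm d (A s u) (Dyψ s x v) = 0 := by
      rw [eu, ev]; exact hkey (φ (s, x)) (A s u) (A s v)
    have hzero : (⟪(A s u).1, (Dyψ s x v).2⟫ + ⟪(Dyψ s x u).1, (A s v).2⟫)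
        - (⟪(A s u).2, (Dyψ s x v).1⟫ + ⟪(Dyψ s x u).2, (A s v).1⟫) = 0 := by
      unfold stdSymplecticForm at hk
      linarith
    rw [hzero] at h1
    exact h1
  -- conclude by constancy
  have hdiff : Differentiable ℝ (fun s' => stdSymplecticForm d (A s' u) (A s' v)) :=
    fun s => (hg s).differentiableAt
  have hconst := is_const_of_deriv_eq_zero hdiff (fun s => (hg s).deriv) t 0
  have hA0 : A 0 = ContinuousLinearMap.id ℝ (PS d) := by
    have h0 : (fun y : PS d => φ (0, y)) = fun y => y := funext hφ0
    rw [hAdef]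
    simp only [h0]
    exact fderiv_id'
  show stdSymplecticForm d (A t u) (A t v) = stdSymplecticForm d u v
  calc stdSymplecticForm d (A t u) (A t v)
      = stdSymplecticForm d (A 0 u) (A 0 v) := hconst
    _ = stdSymplecticForm d u v := by rw [hA0]; rfl
end

section
/- Let d_q, d_p ≥ 1, let s₁ : ℝ^{d_p} → Matrix(d_q, d_q, ℝ) be differentiable, and fix τ ∈ ℝ. Define f : ℝ^{d_q} × ℝ^{d_p} → ℝ^{d_q} × ℝ^{d_p} by f(q,p) = (exp(τ s₁(p)) q, p), where exp is the matrix exponential. Then f is differentiable and the determinant of its Fréchet derivative at any point (q,p) equals exp(τ · tr(s₁(p))). In particular, the log-density update of the order-one Verlet update φ(γ₁^q, τ) is tr(τ s₁(p)). -/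
open NormedSpace -- for the exponential `exp`

attribute [local instance] Matrix.normedAddCommGroup Matrix.normedSpace

namespace VerletAux


/-- Type synonym for square matrices carrying the `L∞` operator norm, making them a Banach
algebra so that the mathlib theory of `exp` applies. -/
def Mop (n : ℕ) : Type := Matrix (Fin n) (Fin n) ℝ

noncomputable instance (n : ℕ) : NormedRing (Mop n) := Matrix.linftyOpNormedRing
noncomputable instance (n : ℕ) : NormedAlgebra ℝ (Mop n) := Matrix.linftyOpNormedAlgebra

instance (n : ℕ) : FiniteDimensional ℝ (Mop n) :=
  inferInstanceAs (Module.Finite ℝ (Matrix (Fin n) (Fin n) ℝ))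

instance (n : ℕ) : CompleteSpace (Mop n) := FiniteDimensional.complete ℝ _

/-- The identity as a continuous linear map `Mop n →L Matrix`. -/
noncomputable def jL (n : ℕ) : Mop n →L[ℝ] Matrix (Fin n) (Fin n) ℝ :=
  LinearMap.toContinuousLinearMap
    { toFun := fun M => M, map_add' := fun _ _ => rfl, map_smul' := fun _ _ => rfl }

/-- The identity as a continuous linear map `Matrix →L Mop n`. -/
noncomputable def jLinv (n : ℕ) : Matrix (Fin n) (Fin n) ℝ →L[ℝ] Mop n :=
  LinearMap.toContinuousLinearMap
    { toFun := fun M => M, map_add' := fun _ _ => rfl, map_smul' := fun _ _ => rfl }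

lemma jexp {n : ℕ} (X : Mop n) : jL n (exp X) = exp (jL n X) := by
  calc jL n (exp X) = jL n (∑' k : ℕ, ((k.factorial : ℝ))⁻¹ • X ^ k) := by rw [exp_eq_tsum ℝ]
    _ = ∑' k : ℕ, jL n (((k.factorial : ℝ))⁻¹ • X ^ k) :=
        (jL n).map_tsum (expSeries_summable' (𝕂 := ℝ) X)
    _ = ∑' k : ℕ, ((k.factorial : ℝ))⁻¹ • (jL n X) ^ k := tsum_congr fun k => rfl
    _ = exp (jL n X) := by rw [exp_eq_tsum ℝ]

lemma diff_exp (n : ℕ) :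
    Differentiable ℝ (exp : Matrix (Fin n) (Fin n) ℝ → Matrix (Fin n) (Fin n) ℝ) := by
  have h1 : Differentiable ℝ (exp : Mop n → Mop n) := fun x =>
    (analyticAt_exp_of_mem_ball (𝕂 := ℝ) x
      (by rw [expSeries_radius_eq_top]; exact edist_lt_top _ _)).differentiableAt
  have h2 : Differentiable ℝ (fun M : Matrix (Fin n) (Fin n) ℝ => jL n (exp (jLinv n M))) :=
    (jL n).differentiable.comp (h1.comp (jLinv n).differentiable)
  have e : (fun M : Matrix (Fin n) (Fin n) ℝ => jL n (exp (jLinv n M)))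
      = (exp : Matrix (Fin n) (Fin n) ℝ → Matrix (Fin n) (Fin n) ℝ) := by
    funext M
    exact jexp (jLinv n M)
  rwa [e] at h2

lemma hasDerivAt_exp_smul {n : ℕ} (S : Matrix (Fin n) (Fin n) ℝ) (t : ℝ) :
    HasDerivAt (fun u : ℝ => exp (u • S)) (exp (t • S) * S) t := by
  have h := hasDerivAt_exp_smul_const (𝕂 := ℝ) (𝔸 := Mop n) (jLinv n S) t
  have h2 := (jL n).hasFDerivAt.comp_hasDerivAt t h
  have e : (⇑(jL n) ∘ fun u : ℝ => exp (u • jLinv n S)) = fun u : ℝ => exp (u • S) := by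
    funext u
    show jL n (exp (u • jLinv n S)) = _
    rw [jexp]
    rfl
  erw [e] at h2
  have e2 : jL n (exp (t • jLinv n S) * jLinv n S) = exp (t • S) * S := by
    have : jL n (exp (t • jLinv n S) * jLinv n S)
        = jL n (exp (t • jLinv n S)) * S := rfl
    rw [this, jexp]
    rfl
  erw [e2] at h2
  exact h2



/-- The determinant as a continuous multilinear map in the rows. -/
noncomputable def detC (n : ℕ) :
    ContinuousMultilinearMap ℝ (fun _ : Fin n => (Fin n → ℝ)) ℝ where
  toMultilinearMap := (Matrix.detRowAlternating (n := Fin n) (R := ℝ)).toMultilinearMap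
  cont := by
    show Continuous fun M : Matrix (Fin n) (Fin n) ℝ => M.det
    exact Continuous.matrix_det continuous_id

lemma det_updateRow_one {n : ℕ} (i : Fin n) (r : Fin n → ℝ) :
    ((1 : Matrix (Fin n) (Fin n) ℝ).updateRow i r).det = r i := by
  have h := Matrix.det_updateRow_sum (1 : Matrix (Fin n) (Fin n) ℝ) i r
  have e : (∑ k, r k • (1 : Matrix (Fin n) (Fin n) ℝ) k) = r := by
    funext j
    simp [Matrix.one_apply, Finset.sum_apply, Finset.sum_ite_eq']
  rw [e] at h
  simpa using h

lemma hasFDerivAt_det_one (n : ℕ) :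
    HasFDerivAt (fun M : Matrix (Fin n) (Fin n) ℝ => M.det)
      ((detC n).linearDeriv (1 : Matrix (Fin n) (Fin n) ℝ)) 1 :=
  (detC n).hasFDerivAt (x := (1 : Matrix (Fin n) (Fin n) ℝ))

lemma linearDeriv_det_one {n : ℕ} (T : Matrix (Fin n) (Fin n) ℝ) :
    (detC n).linearDeriv (1 : Matrix (Fin n) (Fin n) ℝ) T = T.trace := by
  erw [ContinuousMultilinearMap.linearDeriv_apply]
  have e : ∀ i : Fin n, (detC n) (Function.update (1 : Matrix (Fin n) (Fin n) ℝ) i (T i)) = T i i :=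
    fun i => det_updateRow_one i (T i)
  rw [Finset.sum_congr rfl fun i _ => e i]
  rfl

lemma det_exp {n : ℕ} (S : Matrix (Fin n) (Fin n) ℝ) :
    (exp S).det = Real.exp S.trace := by
  classical
  set c := S.trace with hc
  set g : ℝ → ℝ := fun t => (exp (t • S)).det with hg
  -- derivative of g at 0
  have hψ : HasDerivAt (fun h : ℝ => exp (h • S)) S 0 := by
    have := hasDerivAt_exp_smul S 0
    simpa using this
  have hg0 : HasDerivAt g c 0 := by
    have hdet : HasFDerivAt (fun M : Matrix (Fin n) (Fin n) ℝ => M.det)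
        ((detC n).linearDeriv (1 : Matrix (Fin n) (Fin n) ℝ)) (exp ((0 : ℝ) • S)) := by
      have e : exp ((0 : ℝ) • S) = (1 : Matrix (Fin n) (Fin n) ℝ) := by
        simp [exp_zero]
      rw [e]
      exact hasFDerivAt_det_one n
    have h2 := hdet.comp_hasDerivAt 0 hψ
    have e2 : ((fun M : Matrix (Fin n) (Fin n) ℝ => M.det) ∘ fun h : ℝ => exp (h • S)) = g :=
      rfl
    rw [e2] at h2
    have h3 : ((detC n).linearDeriv (1 : Matrix (Fin n) (Fin n) ℝ)) S = c := by
      rw [linearDeriv_det_one, hc]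
    exact h3 ▸ h2
  -- multiplicativity
  have hmul : ∀ s t : ℝ, g (s + t) = g s * g t := by
    intro s t
    have hcomm : Commute (s • S) (t • S) := ((Commute.refl S).smul_left s).smul_right t
    show (exp ((s + t) • S)).det = (exp (s • S)).det * (exp (t • S)).det
    rw [add_smul, Matrix.exp_add_of_commute _ _ hcomm, Matrix.det_mul]
  have hgval0 : g 0 = 1 := by simp [g, exp_zero]
  -- derivative everywhere
  have hgt : ∀ t : ℝ, HasDerivAt g (g t * c) t := by
    intro t
    have h0 : HasDerivAt (fun u : ℝ => g t * g u) (g t * c) 0 := hg0.const_mul (g t)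
    have e : (fun u : ℝ => g t * g u) = fun u : ℝ => g (t + u) := by
      funext u; rw [hmul]
    rw [e] at h0
    have hid : HasDerivAt (fun x : ℝ => x - t) 1 t := by
      simpa using (hasDerivAt_id t).sub_const t
    rw [show (0:ℝ) = t - t by ring] at h0
    have := HasDerivAt.comp (h := fun x : ℝ => x - t) (x := t) h0 hid
    have e2 : ((fun u : ℝ => g (t + u)) ∘ fun x : ℝ => x - t) = g := by
      funext x; simp [Function.comp]
    rw [e2] at this
    simpa using this
  -- the quotient is constant
  have hF : ∀ t : ℝ, HasDerivAt (fun t : ℝ => g t * Real.exp (-c * t)) 0 t := by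
    intro t
    have hexp : HasDerivAt (fun t : ℝ => Real.exp (-c * t)) (Real.exp (-c * t) * (-c)) t := by
      have : HasDerivAt (fun t : ℝ => -c * t) (-c) t := by
        simpa using (hasDerivAt_id t).const_mul (-c)
      exact this.exp
    have := (hgt t).mul hexp
    rw [show (0:ℝ) = g t * c * Real.exp (-c * t) + g t * (Real.exp (-c * t) * -c) by ring]
    exact this
  have hconst : ∀ t : ℝ, g t * Real.exp (-c * t) = 1 := by
    intro t
    have h1 : g t * Real.exp (-c * t) = g 0 * Real.exp (-c * 0) :=
      is_const_of_deriv_eq_zero (fun x => (hF x).differentiableAt)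
        (fun x => (hF x).deriv) t 0
    simpa [hgval0] using h1
  have hgt1 : g 1 = Real.exp c := by
    have h := hconst 1
    rw [mul_comm] at h
    have h2 := congrArg (fun y => Real.exp (c * 1) * y) h
    simp only [mul_one] at h2 h ⊢
    rw [← mul_assoc, ← Real.exp_add] at h2
    simp at h2
    linarith [h2]
  have e1 : exp S = exp ((1 : ℝ) • S) := by rw [one_smul]
  rw [e1]
  exact hgt1


/-- Matrix-vector multiplication as a continuous bilinear map. -/
noncomputable def mvC (n : ℕ) :
    Matrix (Fin n) (Fin n) ℝ →L[ℝ] (Fin n → ℝ) →L[ℝ] (Fin n → ℝ) :=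
  LinearMap.toContinuousLinearMap
    ((LinearMap.toContinuousLinearMap :
        ((Fin n → ℝ) →ₗ[ℝ] (Fin n → ℝ)) ≃ₗ[ℝ] ((Fin n → ℝ) →L[ℝ] (Fin n → ℝ))).toLinearMap ∘ₗ
      (Matrix.toLin' : Matrix (Fin n) (Fin n) ℝ ≃ₗ[ℝ] ((Fin n → ℝ) →ₗ[ℝ] (Fin n → ℝ))).toLinearMap)

@[simp] lemma mvC_apply {n : ℕ} (M : Matrix (Fin n) (Fin n) ℝ) (v : Fin n → ℝ) :
    mvC n M v = M.mulVec v := by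
  simp [mvC, Matrix.toLin'_apply]



end VerletAux

open VerletAux in
/-- **Log-density update of the order-one Verlet update** (Table 1, second row).
The map `f(q,p) = (exp(τ s₁(p)) q, p)` is differentiable, and the determinant of
its Fréchet derivative at any `(q,p)` equals `exp(τ · tr(s₁(p)))`; in particular
the log-density update of `φ(γ₁^q, τ)` is `tr(τ s₁(p))`. -/
theorem order_one_verlet_update_det
    (dq dp : ℕ) (hdq : 1 ≤ dq) (hdp : 1 ≤ dp)
    (s₁ : (Fin dp → ℝ) → Matrix (Fin dq) (Fin dq) ℝ) (hs₁ : Differentiable ℝ s₁) (τ : ℝ) :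
    Differentiable ℝ
      (fun x : (Fin dq → ℝ) × (Fin dp → ℝ) => ((exp (τ • s₁ x.2)).mulVec x.1, x.2)) ∧
    ∀ x : (Fin dq → ℝ) × (Fin dp → ℝ),
      LinearMap.det
        (fderiv ℝ
          (fun x : (Fin dq → ℝ) × (Fin dp → ℝ) => ((exp (τ • s₁ x.2)).mulVec x.1, x.2))
          x).toLinearMap
        = Real.exp (τ * Matrix.trace (s₁ x.2)) ∧
      Real.log |LinearMap.det
        (fderiv ℝ
          (fun x : (Fin dq → ℝ) × (Fin dp → ℝ) => ((exp (τ • s₁ x.2)).mulVec x.1, x.2))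
          x).toLinearMap|
        = Matrix.trace (τ • s₁ x.2) := by
  classical
  set X := (Fin dq → ℝ) × (Fin dp → ℝ)
  set N : (Fin dp → ℝ) → Matrix (Fin dq) (Fin dq) ℝ := fun p => exp (τ • s₁ p) with hNdef
  have hN : Differentiable ℝ N := (diff_exp dq).comp (hs₁.const_smul τ)
  -- the full derivative at each point
  have key : ∀ x : X, HasFDerivAt
      (fun y : X => ((N y.2).mulVec y.1, y.2))
      ((((mvC dq).precompR X (N x.2) (ContinuousLinearMap.fst ℝ _ _) +
          (mvC dq).precompL X
            ((fderiv ℝ N x.2).comp (ContinuousLinearMap.snd ℝ _ _)) x.1)).prod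
        (ContinuousLinearMap.snd ℝ _ _)) x := by
    intro x
    have h1 : HasFDerivAt (fun y : X => N y.2)
        ((fderiv ℝ N x.2).comp (ContinuousLinearMap.snd ℝ _ _)) x :=
      ((hN x.2).hasFDerivAt).comp x (hasFDerivAt_snd)
    have h2 : HasFDerivAt (fun y : X => y.1) (ContinuousLinearMap.fst ℝ _ _) x :=
      hasFDerivAt_fst
    have h3 := (mvC dq).hasFDerivAt_of_bilinear h1 h2
    have e : (fun y : X => mvC dq (N y.2) y.1) = fun y : X => (N y.2).mulVec y.1 := by
      funext y; simp
    erw [e] at h3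
    exact HasFDerivAt.prodMk h3 hasFDerivAt_snd
  constructor
  · exact fun x => ((key x).differentiableAt : _)
  intro x
  obtain ⟨q, p⟩ := x
  have hL := (key (q, p)).fderiv
  rw [hL]
  set B := fderiv ℝ N p with hB
  set L := (((mvC dq).precompR X (N p) (ContinuousLinearMap.fst ℝ _ _) +
      (mvC dq).precompL X (B.comp (ContinuousLinearMap.snd ℝ _ _)) q)).prod
      (ContinuousLinearMap.snd ℝ _ _) with hLdef
  have happ : ∀ u v, L.toLinearMap (u, v) = ((N p).mulVec u + (B v).mulVec q, v) := by
    intro u v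
    simp only [L, ContinuousLinearMap.coe_prod, ContinuousLinearMap.coe_add,
      ContinuousLinearMap.prod_apply, LinearMap.prod_apply, LinearMap.coe_comp,
      Function.comp_apply, LinearMap.add_apply, ContinuousLinearMap.coe_coe,
      ContinuousLinearMap.add_apply, ContinuousLinearMap.precompR,
      ContinuousLinearMap.precompL, ContinuousLinearMap.comp_apply,
      ContinuousLinearMap.flip_apply, ContinuousLinearMap.compL_apply, mvC_apply,
      ContinuousLinearMap.coe_fst', ContinuousLinearMap.coe_snd', Pi.prod]
    rfl
  set b := (Pi.basisFun ℝ (Fin dq)).prod (Pi.basisFun ℝ (Fin dp)) with hb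
  have hmat : LinearMap.toMatrix b b L.toLinearMap
      = Matrix.fromBlocks (N p)
          (Matrix.of fun i j => (B (Pi.single j 1)).mulVec q i) 0 1 := by
    ext i j
    rw [LinearMap.toMatrix_apply]
    cases j with
    | inl j =>
      have hbj : b (Sum.inl j) = (Pi.single j 1, 0) := by
        simp [b, Module.Basis.prod_apply, Pi.basisFun_apply]
      rw [hbj, happ]
      cases i with
      | inl i =>
        simp [b, Matrix.fromBlocks_apply₁₁, Matrix.mulVec, dotProduct,
          Pi.single_apply, Finset.sum_ite_eq', Pi.basisFun_repr]
      | inr i =>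
        simp [b, Matrix.fromBlocks_apply₂₁, Pi.basisFun_repr]
    | inr j =>
      have hbj : b (Sum.inr j) = (0, Pi.single j 1) := by
        simp [b, Module.Basis.prod_apply, Pi.basisFun_apply]
      rw [hbj, happ]
      cases i with
      | inl i =>
        simp [b, Matrix.fromBlocks_apply₁₂, Pi.basisFun_repr]
      | inr i =>
        simp [b, Matrix.fromBlocks_apply₂₂, Pi.basisFun_repr, Matrix.one_apply,
          Pi.single_apply, eq_comm]
  have hdetL : LinearMap.det L.toLinearMap = Real.exp (τ * Matrix.trace (s₁ p)) := by
    rw [← LinearMap.det_toMatrix b, hmat, Matrix.det_fromBlocks_zero₂₁, Matrix.det_one, mul_one,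
      hNdef]
    rw [det_exp, Matrix.trace_smul, smul_eq_mul]
  refine ⟨hdetL, ?_⟩
  rw [hdetL, abs_of_pos (Real.exp_pos _), Real.log_exp, Matrix.trace_smul, smul_eq_mul]
end

section
/- Let k ≥ 2 be an integer, d ≥ 1, s ∈ ℝ^d, τ ∈ ℝ, and let q ∈ ℝ^d have all coordinates positive with q_i^{1-k} + τ(1-k)s_i > 0 for all i. Define F : ℝ^d → ℝ^d componentwise by F(q)_i = (q_i^{1-k} + τ(1-k) s_i)^{1/(1-k)}. Then F is differentiable at q, its Fréchet derivative is a diagonal linear map, and log|det DF(q)| = Σ_i [ (k/(1-k)) · log|q_i^{1-k} + τ(1-k) s_i| - k · log|q_i| ]. -/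
/-- The sparse order-`k` Taylor-Verlet `q`-update, acting componentwise by
`q_i ↦ (q_i^(1-k) + τ(1-k) s_i)^(1/(1-k))`. -/
noncomputable def sparseVerletUpdate (k d : ℕ) (s : Fin d → ℝ) (τ : ℝ)
    (q : Fin d → ℝ) : Fin d → ℝ :=
  fun i => (q i ^ ((1 : ℝ) - k) + τ * ((1 : ℝ) - k) * s i) ^ (1 / ((1 : ℝ) - k))

/-- **Log-density update of the sparse higher-order Verlet update**
(Table 1, third row). At a point `q` with all coordinates positive and
`q_i^(1-k) + τ(1-k)s_i > 0` for all `i`, the componentwise map `F` is differentiable,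
its Fréchet derivative is a diagonal linear map, and
`log |det DF(q)| = Σ_i [(k/(1-k)) log|q_i^(1-k) + τ(1-k)s_i| - k log|q_i|]`. -/
theorem sparse_verlet_update_log_det
    (k : ℕ) (hk : 2 ≤ k) (d : ℕ) (hd : 1 ≤ d)
    (s : Fin d → ℝ) (τ : ℝ) (q : Fin d → ℝ)
    (hq : ∀ i, 0 < q i)
    (hqs : ∀ i, 0 < q i ^ ((1 : ℝ) - k) + τ * ((1 : ℝ) - k) * s i) :
    DifferentiableAt ℝ (sparseVerletUpdate k d s τ) q ∧
    (∃ D : Fin d → ℝ, ∀ (v : Fin d → ℝ) (i : Fin d),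
      fderiv ℝ (sparseVerletUpdate k d s τ) q v i = D i * v i) ∧
    Real.log |LinearMap.det (fderiv ℝ (sparseVerletUpdate k d s τ) q).toLinearMap| =
      ∑ i, ((k : ℝ) / ((1 : ℝ) - k) *
          Real.log |q i ^ ((1 : ℝ) - k) + τ * ((1 : ℝ) - k) * s i|
        - k * Real.log |q i|) := by
  have hk1 : (1 : ℝ) - (k : ℝ) ≠ 0 := by
    have : (2 : ℝ) ≤ (k : ℝ) := by exact_mod_cast hk
    nlinarith
  set A : Fin d → ℝ := fun i => q i ^ ((1 : ℝ) - k) + τ * ((1 : ℝ) - k) * s i with hA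
  set D : Fin d → ℝ :=
    fun i => A i ^ (1 / ((1 : ℝ) - k) - 1) * q i ^ (-(k : ℝ)) with hD
  set L : (Fin d → ℝ) →L[ℝ] (Fin d → ℝ) :=
    ContinuousLinearMap.pi (fun i => D i • ContinuousLinearMap.proj (R := ℝ) (φ := fun _ : Fin d => ℝ) i) with hL
  -- derivative of each component as a scalar function
  have hcomp : ∀ i : Fin d,
      HasFDerivAt (fun x : Fin d → ℝ =>
        (x i ^ ((1 : ℝ) - k) + τ * ((1 : ℝ) - k) * s i) ^ (1 / ((1 : ℝ) - k)))
        (D i • ContinuousLinearMap.proj (R := ℝ) (φ := fun _ : Fin d => ℝ) i) q := by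
    intro i
    have hu : HasDerivAt (fun x : ℝ => x ^ ((1 : ℝ) - k) + τ * ((1 : ℝ) - k) * s i)
        (((1 : ℝ) - k) * q i ^ ((1 : ℝ) - k - 1)) (q i) :=
      (Real.hasDerivAt_rpow_const (Or.inl (hq i).ne')).add_const _
    have hh : HasDerivAt (fun y : ℝ => y ^ (1 / ((1 : ℝ) - k)))
        ((1 / ((1 : ℝ) - k)) * A i ^ (1 / ((1 : ℝ) - k) - 1)) (A i) :=
      Real.hasDerivAt_rpow_const (Or.inl (hqs i).ne')
    have h1 : HasDerivAt (fun x : ℝ =>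
        (x ^ ((1 : ℝ) - k) + τ * ((1 : ℝ) - k) * s i) ^ (1 / ((1 : ℝ) - k)))
        ((1 / ((1 : ℝ) - k)) * A i ^ (1 / ((1 : ℝ) - k) - 1) *
          (((1 : ℝ) - k) * q i ^ ((1 : ℝ) - k - 1))) (q i) := by have := hh.comp (q i) hu; exact this
    have hDerEq : (1 / ((1 : ℝ) - k)) * A i ^ (1 / ((1 : ℝ) - k) - 1) *
        (((1 : ℝ) - k) * q i ^ ((1 : ℝ) - k - 1)) = D i := by
      have he : (1 : ℝ) - (k : ℝ) - 1 = -(k : ℝ) := by ring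
      rw [hD, he]
      field_simp
    rw [hDerEq] at h1
    have := HasDerivAt.comp_hasFDerivAt (f := fun x : Fin d → ℝ => x i) q h1 (hasFDerivAt_apply (𝕜 := ℝ) i q); exact this
  have hF : HasFDerivAt (sparseVerletUpdate k d s τ) L q := by
    rw [hasFDerivAt_pi']
    intro i
    have : (ContinuousLinearMap.proj i).comp L = D i • ContinuousLinearMap.proj (R := ℝ)
        (φ := fun _ : Fin d => ℝ) i := by
      ext v
      simp [hL]
    rw [this]
    exact hcomp i
  have hfderiv : fderiv ℝ (sparseVerletUpdate k d s τ) q = L := hF.fderiv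
  refine ⟨hF.differentiableAt, ⟨D, ?_⟩, ?_⟩
  · intro v i
    rw [hfderiv]
    simp [hL]
  · -- determinant computation
    have hAi : ∀ i, 0 < A i := hqs
    have hDpos : ∀ i, 0 < D i := by
      intro i
      exact mul_pos (Real.rpow_pos_of_pos (hAi i) _) (Real.rpow_pos_of_pos (hq i) _)
    have hmat : LinearMap.toMatrix' L.toLinearMap = Matrix.diagonal D := by
      ext i j
      simp only [LinearMap.toMatrix'_apply, ContinuousLinearMap.coe_coe, hL,
        ContinuousLinearMap.pi_apply, ContinuousLinearMap.smul_apply,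
        ContinuousLinearMap.proj_apply, Matrix.diagonal]
      by_cases h : i = j <;> simp [h, Pi.single_apply, eq_comm]
    have hdet : LinearMap.det L.toLinearMap = ∏ i, D i := by
      rw [← LinearMap.det_toMatrix' , hmat, Matrix.det_diagonal]
    rw [hfderiv, hdet]
    rw [Finset.abs_prod, Real.log_prod (fun i _ => (abs_pos.mpr (hDpos i).ne').ne')]
    apply Finset.sum_congr rfl
    intro i _
    rw [abs_of_pos (hDpos i), Real.log_mul (Real.rpow_pos_of_pos (hAi i) _).ne'
      (Real.rpow_pos_of_pos (hq i) _).ne',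
      Real.log_rpow (hAi i), Real.log_rpow (hq i)]
    rw [abs_of_pos (hAi i), abs_of_pos (hq i)]
    have : 1 / ((1 : ℝ) - k) - 1 = (k : ℝ) / ((1 : ℝ) - k) := by
      field_simp
      ring
    rw [this]
    ring
end

section
/- Let d_q, d_p ≥ 1 and τ ≠ 0, and let s^q : ℝ^{d_p} → ℝ^{d_q} and t^q : ℝ^{d_p} → ℝ^{d_q} be arbitrary functions. Define the RealNVP coupling map f^q(q,p) = (q ⊙ exp(s^q(p)) + t^q(p), p), where ⊙ is the componentwise product and exp acts componentwise. Define the order-zero and order-one Verlet q-updates φ₀(q,p) = (q + τ · t̃(p), p) and φ₁(q,p) = (exp(τ s̃(p)) q, p), where s̃(p) = (1/τ) diag(s^q(p)) (a diagonal matrix), exp is the matrix exponential, and t̃(p) is defined componentwise by t̃(p)_i = t^q(p)_i / (τ · exp(s^q(p)_i)). Then φ₁ ∘ φ₀ = f^q. -/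
open NormedSpace -- for the exponential `exp`

/-- **RealNVP coupling layers are compositions of Taylor-Verlet updates**
(Appendix D). With Verlet coefficients `s̃(p) = (1/τ) diag(s^q(p))` and
`t̃(p)_i = t^q(p)_i / (τ exp(s^q(p)_i))`, the composition of the order-zero update
`φ₀(q,p) = (q + τ t̃(p), p)` and the order-one update `φ₁(q,p) = (exp(τ s̃(p)) q, p)`
(matrix exponential) equals the RealNVP coupling map
`f^q(q,p) = (q ⊙ exp(s^q(p)) + t^q(p), p)`. -/
theorem realnvp_coupling_is_order_one_verlet
    (dq dp : ℕ) (hdq : 1 ≤ dq) (hdp : 1 ≤ dp) (τ : ℝ) (hτ : τ ≠ 0)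
    (sq tq : (Fin dp → ℝ) → (Fin dq → ℝ)) :
    ((fun x : (Fin dq → ℝ) × (Fin dp → ℝ) =>
        ((exp (τ • ((1 / τ) • Matrix.diagonal (sq x.2)))).mulVec x.1, x.2))
      ∘ (fun x : (Fin dq → ℝ) × (Fin dp → ℝ) =>
        (x.1 + τ • fun i => tq x.2 i / (τ * Real.exp (sq x.2 i)), x.2)))
    = (fun x : (Fin dq → ℝ) × (Fin dp → ℝ) =>
        ((fun i => x.1 i * Real.exp (sq x.2 i) + tq x.2 i), x.2)) := by
  funext x
  have h1 : τ • ((1 / τ) • Matrix.diagonal (sq x.2)) = Matrix.diagonal (sq x.2) := by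
    rw [smul_smul, mul_one_div, div_self hτ, one_smul]
  simp only [Function.comp_apply, h1, Matrix.exp_diagonal]
  refine Prod.ext (funext fun i => ?_) rfl
  have hexp : (0:ℝ) < Real.exp (sq x.2 i) := Real.exp_pos _
  simp only [Matrix.mulVec_diagonal, Pi.add_apply, Pi.smul_apply, smul_eq_mul,
    ← Real.exp_eq_exp_ℝ]
  field_simp
  rw [Pi.coe_exp, ← Real.exp_eq_exp_ℝ]
end
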